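/- arXiv:2210.00677 — 4 statements merged into one kernel-verified Lean document; each statement's English description precedes it below -/
import Mathlib

section
/- Lemma (exit-time bound under downward acceleration). Let g > 0, τ ≥ 0, t ∈ ℝ, and let X₃ : [t−τ, t] → ℝ be twice differentiable with X₃''(s) ≤ −g/2 for all s ∈ [t−τ, t]. Set x₃ := X₃(t), v₃ := X₃'(t), v_b := X₃'(t−τ), and assume x₃ ≥ 0 and X₃(t−τ) = 0. Then v_b² ≥ g x₃ and τ ≤ (2/g) · min{ √(v₃² + g x₃) − v₃ , √(v_b² − g x₃) + v_b }. -/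
/-!
Since `X'' ≤ -g/2`, `X` lies below the parabola of acceleration `-g/2` tangent to it at `t - τ`
and above the one tangent to it at `t`, whence `v₃ τ + g τ² / 4 ≤ x₃ ≤ v_b τ - g τ² / 4`.
The right inequality gives `g x₃ ≤ v_b² - (v_b - g τ / 2)²`, and the two inequalities bound the
squares of `g τ / 2 + v₃` and `g τ / 2 - v_b` by `v₃² + g x₃` and `v_b² - g x₃`.
-/

open Set

lemma Convex.monotoneOn_of_hasDerivWithinAt_nonneg {D : Set ℝ} (hD : Convex ℝ D)
    {f f' : ℝ → ℝ} (hf : ∀ s ∈ D, HasDerivWithinAt f (f' s) D s) (hf' : ∀ s ∈ D, 0 ≤ f' s) :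
    MonotoneOn f D :=
  _root_.monotoneOn_of_hasDerivWithinAt_nonneg hD (fun s hs ↦ (hf s hs).continuousWithinAt)
    (fun s hs ↦ (hf s (interior_subset hs)).mono interior_subset)
    (fun s hs ↦ hf' s (interior_subset hs))

section SecondDerivativeLE

variable {f f' f'' : ℝ → ℝ} {a b K : ℝ}

lemma monotoneOn_mul_sub_of_deriv2_le
    (hf' : ∀ s ∈ Icc a b, HasDerivWithinAt f' (f'' s) (Icc a b) s)
    (hf'' : ∀ s ∈ Icc a b, f'' s ≤ K) :
    MonotoneOn (fun s ↦ K * s - f' s) (Icc a b) :=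
  (convex_Icc a b).monotoneOn_of_hasDerivWithinAt_nonneg
    (fun s hs ↦ ((hasDerivWithinAt_id s _).const_mul K |>.sub (hf' s hs)).congr_deriv (by simp))
    (fun s hs ↦ sub_nonneg.2 (hf'' s hs))

lemma deriv_le_add_mul_of_deriv2_le
    (hf' : ∀ s ∈ Icc a b, HasDerivWithinAt f' (f'' s) (Icc a b) s)
    (hf'' : ∀ s ∈ Icc a b, f'' s ≤ K) {s : ℝ} (hs : s ∈ Icc a b) :
    f' s ≤ f' a + K * (s - a) := by
  have := monotoneOn_mul_sub_of_deriv2_le hf' hf'' (left_mem_Icc.2 (hs.1.trans hs.2)) hs hs.1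
  linarith

lemma sub_mul_le_deriv_of_deriv2_le
    (hf' : ∀ s ∈ Icc a b, HasDerivWithinAt f' (f'' s) (Icc a b) s)
    (hf'' : ∀ s ∈ Icc a b, f'' s ≤ K) {s : ℝ} (hs : s ∈ Icc a b) :
    f' b - K * (b - s) ≤ f' s := by
  have := monotoneOn_mul_sub_of_deriv2_le hf' hf'' hs (right_mem_Icc.2 (hs.1.trans hs.2)) hs.2
  linarith

lemma sub_le_deriv_mul_add_sq_of_deriv2_le
    (hf : ∀ s ∈ Icc a b, HasDerivWithinAt f (f' s) (Icc a b) s)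
    (hf' : ∀ s ∈ Icc a b, HasDerivWithinAt f' (f'' s) (Icc a b) s)
    (hf'' : ∀ s ∈ Icc a b, f'' s ≤ K) (hab : a ≤ b) :
    f b - f a ≤ f' a * (b - a) + K / 2 * (b - a) ^ 2 := by
  have hmono : MonotoneOn (fun s ↦ f' a * s + K / 2 * (s - a) ^ 2 - f s) (Icc a b) := by
    refine (convex_Icc a b).monotoneOn_of_hasDerivWithinAt_nonneg
      (f' := fun s ↦ f' a + K * (s - a) - f' s) (fun s hs ↦ ?_) (fun s hs ↦ ?_)
    · have := (((hasDerivWithinAt_id s _).const_mul (f' a)).add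
        ((((hasDerivWithinAt_id s _).sub_const a).pow 2).const_mul (K / 2))).sub (hf s hs)
      exact this.congr_deriv (by simp only [id]; ring)
    · exact sub_nonneg.2 (deriv_le_add_mul_of_deriv2_le hf' hf'' hs)
  have := hmono (left_mem_Icc.2 hab) (right_mem_Icc.2 hab) hab
  simp only [sub_self] at this
  linarith

lemma deriv_mul_sub_sq_le_sub_of_deriv2_le
    (hf : ∀ s ∈ Icc a b, HasDerivWithinAt f (f' s) (Icc a b) s)
    (hf' : ∀ s ∈ Icc a b, HasDerivWithinAt f' (f'' s) (Icc a b) s)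
    (hf'' : ∀ s ∈ Icc a b, f'' s ≤ K) (hab : a ≤ b) :
    f' b * (b - a) - K / 2 * (b - a) ^ 2 ≤ f b - f a := by
  have hmono : MonotoneOn (fun s ↦ f s - f' b * s - K / 2 * (b - s) ^ 2) (Icc a b) := by
    refine (convex_Icc a b).monotoneOn_of_hasDerivWithinAt_nonneg
      (f' := fun s ↦ f' s - f' b + K * (b - s)) (fun s hs ↦ ?_) (fun s hs ↦ ?_)
    · have := ((hf s hs).sub ((hasDerivWithinAt_id s _).const_mul (f' b))).sub
        ((((hasDerivWithinAt_id s _).const_sub b).pow 2).const_mul (K / 2))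
      exact this.congr_deriv (by simp only [id]; ring)
    · have := sub_mul_le_deriv_of_deriv2_le hf' hf'' hs
      linarith
  have := hmono (left_mem_Icc.2 hab) (right_mem_Icc.2 hab) hab
  simp only [sub_self] at this
  linarith

end SecondDerivativeLE

lemma le_two_div_mul_sqrt_sub {g τ v y : ℝ} (hg : 0 < g) (h : (g * τ / 2 + v) ^ 2 ≤ y) :
    τ ≤ 2 / g * (√y - v) := by
  have := Real.le_sqrt_of_sq_le h
  rw [div_mul_eq_mul_div, le_div_iff₀ hg]
  linarith

theorem exit_time_bound_general
    (g τ t : ℝ) (hg : 0 < g) (hτ : 0 ≤ τ)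
    (X X' X'' : ℝ → ℝ)
    (hX : ∀ s ∈ Set.Icc (t - τ) t, HasDerivWithinAt X (X' s) (Set.Icc (t - τ) t) s)
    (hX' : ∀ s ∈ Set.Icc (t - τ) t, HasDerivWithinAt X' (X'' s) (Set.Icc (t - τ) t) s)
    (hacc : ∀ s ∈ Set.Icc (t - τ) t, X'' s ≤ -g / 2)
    (hexit : X (t - τ) = 0) :
    g * X t ≤ (X' (t - τ)) ^ 2 ∧
      τ ≤ 2 / g * min (Real.sqrt ((X' t) ^ 2 + g * X t) - X' t)
            (Real.sqrt ((X' (t - τ)) ^ 2 - g * X t) + X' (t - τ)) := by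
  have hle : t - τ ≤ t := by linarith
  have hupper := sub_le_deriv_mul_add_sq_of_deriv2_le hX hX' hacc hle
  have hlower := deriv_mul_sub_sq_le_sub_of_deriv2_le hX hX' hacc hle
  simp only [hexit, sub_sub_cancel, sub_zero] at hupper hlower
  rw [mul_min_of_nonneg _ _ (by positivity)]
  refine ⟨?_, le_min ?_ ?_⟩
  · nlinarith [sq_nonneg (X' (t - τ) - g * τ / 2)]
  · exact le_two_div_mul_sqrt_sub hg (by nlinarith)
  · rw [← sub_neg_eq_add]
    exact le_two_div_mul_sqrt_sub hg (by nlinarith)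

/-- **Exit-time bound under downward acceleration.**  If the vertical component `X₃`
of a trajectory has acceleration `≤ −g/2` on `[t−τ, t]`, ends at height `x₃ = X₃(t) ≥ 0`,
and exits through the boundary (`X₃(t−τ) = 0`), then `v_b² ≥ g x₃` and
`τ ≤ (2/g) min{√(v₃² + g x₃) − v₃, √(v_b² − g x₃) + v_b}`. -/
theorem exit_time_bound
    (g τ t : ℝ) (hg : 0 < g) (hτ : 0 ≤ τ)
    (X X' X'' : ℝ → ℝ)
    (hX : ∀ s ∈ Set.Icc (t - τ) t, HasDerivWithinAt X (X' s) (Set.Icc (t - τ) t) s)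
    (hX' : ∀ s ∈ Set.Icc (t - τ) t, HasDerivWithinAt X' (X'' s) (Set.Icc (t - τ) t) s)
    (hacc : ∀ s ∈ Set.Icc (t - τ) t, X'' s ≤ -g / 2)
    (hx3 : 0 ≤ X t) (hexit : X (t - τ) = 0) :
    g * X t ≤ (X' (t - τ)) ^ 2 ∧
      τ ≤ 2 / g * min (Real.sqrt ((X' t) ^ 2 + g * X t) - X' t)
            (Real.sqrt ((X' (t - τ)) ^ 2 - g * X t) + X' (t - τ)) :=
  exit_time_bound_general g τ t hg hτ X X' X'' hX hX' hacc hexit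
end

section
/- Lemma (two-sided Gronwall bounds for the kinetic distance). Let g > 0 and let Φ : ℝ² × [0,∞) → ℝ be C² with ‖∇ₓΦ‖_{L∞} ≤ g/2. Define the kinetic distance α(x,v) := √( v₃² + x₃² + 2 ∂_{x₃}Φ(x∥, 0) x₃ + 2 g x₃ ) for x = (x∥, x₃) with x₃ ≥ 0 and v ∈ ℝ³. Let (X, V) : [−τ, 0] → (ℝ²×[0,∞)) × ℝ³ solve X' = V, V' = −∇ₓΦ(X) − g e₃ with (X(0), V(0)) = (x, v). Then for every t ∈ [−τ, 0]: α(X(t), V(t)) ≤ α(x,v) · exp( (1 + ‖∂_{x₃}²Φ‖_{L∞}) |t| ) · exp( (1/g) ‖∇_{x∥} ∂_{x₃}Φ‖_{L∞(x₃=0)} ∫_t^0 |V∥(s)| ds ), and α(X(t), V(t)) ≥ α(x,v) · exp( −(1 + ‖∂_{x₃}²Φ‖_{L∞}) |t| ) · exp( −(1/g) ‖∇_{x∥} ∂_{x₃}Φ‖_{L∞(x₃=0)} ∫_t^0 |V∥(s)| ds ). -/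
/-!
Along a backward characteristic put `β = α²`. Differentiating, the gravity terms cancel and
`β' = 2V₃(∂₃Φ(X∥,0) − ∂₃Φ(X)) + 2X₃V₃ + 2X₃ V∥·∇∥∂₃Φ(X∥,0)`. The mean value theorem in the
vertical direction bounds the first difference by `‖∂₃²Φ‖ X₃`, and `|∂₃Φ| ≤ g/2` gives the
coercivity `β ≥ V₃² + X₃² + g X₃`, so that `|V₃| X₃ ≤ β` and `X₃ ≤ β/g`. Hence
`|β'| ≤ 2(1 + ‖∂₃²Φ‖ + ‖∇∥∂₃Φ‖ |V∥| / g) β`, and Gronwall's inequality, run in both directions,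
followed by a square root gives the two bounds.
-/

open MeasureTheory Real Set

noncomputable section

abbrev V3 : Type := Fin 3 → ℝ

def pd (i : Fin 3) (f : V3 → ℝ) (x : V3) : ℝ := fderiv ℝ f x (Pi.single i 1)

def gradNorm (f : V3 → ℝ) (x : V3) : ℝ := Real.sqrt (∑ i, (pd i f x) ^ 2)

/-- The kinetic distance `α(x,v) = √(v₃² + x₃² + 2∂_{x₃}Φ(x∥,0)x₃ + 2g x₃)`. -/
def alphaK (g : ℝ) (Φ : V3 → ℝ) (x v : V3) : ℝ :=
  Real.sqrt ((v 2) ^ 2 + (x 2) ^ 2 + 2 * pd 2 Φ ![x 0, x 1, 0] * x 2 + 2 * g * x 2)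

theorem fderiv_apply_eq_sum_pd (f : V3 → ℝ) (x w : V3) :
    fderiv ℝ f x w = ∑ i, w i * pd i f x := by
  conv_lhs => rw [pi_eq_sum_univ w]
  simp only [map_sum, map_smul, smul_eq_mul, pd]
  congr! with i
  simp [Pi.single_apply, eq_comm]

theorem abs_pd_le_gradNorm (f : V3 → ℝ) (x : V3) (i : Fin 3) : |pd i f x| ≤ gradNorm f x := by
  rw [← sqrt_sq_eq_abs]
  exact sqrt_le_sqrt (Finset.single_le_sum (f := fun j => pd j f x ^ 2)
    (fun j _ => sq_nonneg _) (Finset.mem_univ i))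

theorem differentiable_pd {f : V3 → ℝ} (hf : ContDiff ℝ 2 f) (i : Fin 3) :
    Differentiable ℝ (pd i f) :=
  ((hf.fderiv_right (m := 1) (by norm_num)).clm_apply contDiff_const).differentiable one_ne_zero

theorem hasDerivAt_comp_add_smul_single {ψ : V3 → ℝ} (hψ : Differentiable ℝ ψ) (i : Fin 3)
    (p : V3) (θ : ℝ) :
    HasDerivAt (fun θ : ℝ => ψ (p + θ • Pi.single i 1)) (pd i ψ (p + θ • Pi.single i 1)) θ := by
  have hline : HasDerivAt (fun θ : ℝ => p + θ • (Pi.single i 1 : V3)) (Pi.single i 1) θ := by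
    simpa using ((hasDerivAt_id θ).smul_const (Pi.single i 1 : V3)).const_add p
  exact (hψ _).hasFDerivAt.comp_hasDerivAt θ hline

theorem abs_sub_le_mul_of_abs_pd_le {ψ : V3 → ℝ} (hψ : Differentiable ℝ ψ) (i : Fin 3)
    (p : V3) {h C : ℝ} (hh : 0 ≤ h) (hC : ∀ θ ∈ Icc 0 h, |pd i ψ (p + θ • Pi.single i 1)| ≤ C) :
    |ψ (p + h • Pi.single i 1) - ψ p| ≤ C * h := by
  simpa using norm_image_sub_le_of_norm_deriv_le_segment'
    (fun θ _ => (hasDerivAt_comp_add_smul_single hψ i p θ).hasDerivWithinAt)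
    (fun θ hθ => hC θ (Ico_subset_Icc_self hθ)) h ⟨hh, le_rfl⟩

theorem abs_mul_add_mul_le_sqrt_mul_sqrt (a b c d : ℝ) :
    |a * c + b * d| ≤ √(a ^ 2 + b ^ 2) * √(c ^ 2 + d ^ 2) := by
  rw [← sqrt_sq_eq_abs, ← sqrt_mul (by positivity)]
  exact sqrt_le_sqrt (by nlinarith [sq_nonneg (a * d - b * c)])

theorem abs_two_mul_add_two_mul_add_two_mul_le {g C D v₃ x₃ d m n β : ℝ} (hg : 0 < g)
    (hC : 0 ≤ C) (hx₃ : 0 ≤ x₃) (hβ : v₃ ^ 2 + x₃ ^ 2 + g * x₃ ≤ β) (hd : |d| ≤ C * x₃) (hm : |m| ≤ n * D) :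
    |2 * v₃ * d + 2 * x₃ * v₃ + 2 * x₃ * m| ≤ 2 * ((1 + C) + D / g * n) * β := by
  have hvx : 2 * |v₃| * x₃ ≤ β := by nlinarith [sq_nonneg (|v₃| - x₃), sq_abs v₃]
  have hx₃β : x₃ ≤ β / g := (le_div_iff₀ hg).2 (by nlinarith)
  have hnD : 0 ≤ n * D := (abs_nonneg m).trans hm
  have hβ0 : 0 ≤ β := by nlinarith [sq_nonneg v₃, sq_nonneg x₃]
  have hvd : 2 * |v₃| * |d| ≤ C * β := by
    nlinarith [mul_le_mul_of_nonneg_left hd (by positivity : 0 ≤ 2 * |v₃|)]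
  have hxm : 2 * x₃ * |m| ≤ 2 * D / g * n * β := by
    calc 2 * x₃ * |m| ≤ 2 * x₃ * (n * D) := by gcongr
      _ ≤ 2 * (β / g) * (n * D) := by gcongr
      _ = 2 * D / g * n * β := by ring
  calc |2 * v₃ * d + 2 * x₃ * v₃ + 2 * x₃ * m|
      ≤ 2 * |v₃| * |d| + 2 * |v₃| * x₃ + 2 * x₃ * |m| := by
        refine (abs_add_le _ _).trans (add_le_add ((abs_add_le _ _).trans (le_of_eq ?_)) ?_)
        · simp only [abs_mul, Nat.abs_ofNat, abs_of_nonneg hx₃]; ring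
        · simp [abs_mul, abs_of_nonneg hx₃]
    _ ≤ 2 * ((1 + C) + D / g * n) * β := by
        have hCβ : 0 ≤ C * β := mul_nonneg hC hβ0
        linarith [show 2 * ((1 + C) + D / g * n) * β = 2 * β + 2 * (C * β) + 2 * D / g * n * β by
          ring]

theorem ContinuousOn.hasDerivAt_integral_of_mem_Ioo {f : ℝ → ℝ} {a b s : ℝ}
    (hf : ContinuousOn f (Icc a b)) (hs : s ∈ Ioo a b) :
    HasDerivAt (fun u => ∫ x in a..u, f x) (f s) s := by
  have hsub : uIcc a s ⊆ Icc a b := by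
    rw [uIcc_of_le hs.1.le]; exact Icc_subset_Icc_right hs.2.le
  exact intervalIntegral.integral_hasDerivAt_right ((hf.mono hsub).intervalIntegrable)
    ((hf.mono Ioo_subset_Icc_self).stronglyMeasurableAtFilter isOpen_Ioo s hs)
    (hf.continuousAt (Icc_mem_nhds hs.1 hs.2))

theorem monotoneOn_mul_exp_integral {β β' f : ℝ → ℝ} {a b : ℝ} (hab : a ≤ b)
    (hf : ContinuousOn f (Icc a b)) (hβ : ∀ s ∈ Icc a b, HasDerivAt β (β' s) s)
    (hβ' : ∀ s ∈ Ioo a b, -(f s * β s) ≤ β' s) :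
    MonotoneOn (fun u => β u * exp (∫ s in a..u, f s)) (Icc a b) := by
  have hderiv : ∀ s ∈ Ioo a b, HasDerivAt (fun u => β u * exp (∫ s in a..u, f s))
      (β' s * exp (∫ s in a..s, f s) + β s * (exp (∫ s in a..s, f s) * f s)) s :=
    fun s hs => (hβ s (Ioo_subset_Icc_self hs)).mul
      (hf.hasDerivAt_integral_of_mem_Ioo hs).exp
  have hprim : ContinuousOn (fun u => ∫ s in a..u, f s) (Icc a b) := by
    rw [← uIcc_of_le hab] at hf ⊢
    exact intervalIntegral.continuousOn_primitive_interval hf.integrableOn_Icc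
  refine monotoneOn_of_deriv_nonneg (convex_Icc a b) ?_ ?_ ?_
  · have hβc : ContinuousOn β (Icc a b) := fun s hs => (hβ s hs).continuousAt.continuousWithinAt
    exact hβc.mul (continuous_exp.comp_continuousOn hprim)
  · rw [interior_Icc]
    exact fun s hs => (hderiv s hs).differentiableAt.differentiableWithinAt
  · rw [interior_Icc]
    intro s hs
    rw [(hderiv s hs).deriv]
    nlinarith [exp_pos (∫ s in a..s, f s), hβ' s hs]

theorem gronwall_two_sided_of_abs_deriv_le_mul {β β' f : ℝ → ℝ} {a b : ℝ} (hab : a ≤ b)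
    (hf : ContinuousOn f (Icc a b)) (hβ : ∀ s ∈ Icc a b, HasDerivAt β (β' s) s)
    (hβ' : ∀ s ∈ Ioo a b, |β' s| ≤ f s * β s) :
    β a ≤ β b * exp (∫ s in a..b, f s) ∧ β b * exp (-∫ s in a..b, f s) ≤ β a := by
  have ha : a ∈ Icc a b := left_mem_Icc.2 hab
  have hb : b ∈ Icc a b := right_mem_Icc.2 hab
  constructor
  · simpa using monotoneOn_mul_exp_integral hab hf hβ (fun s hs => neg_le_of_abs_le (hβ' s hs))
      ha hb hab
  -- The lower bound is the upper bound for `-β` and `-f`.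
  · have := monotoneOn_mul_exp_integral (β := fun s => -β s) (β' := fun s => -β' s) hab hf.neg
      (fun s hs => (hβ s hs).neg) (fun s hs => by simpa using le_of_abs_le (hβ' s hs)) ha hb hab
    simp only [intervalIntegral.integral_same, exp_zero, mul_one, Pi.neg_apply,
      intervalIntegral.integral_neg] at this
    linarith

theorem sqrt_mul_exp_two_mul {β : ℝ} (hβ : 0 ≤ β) (A : ℝ) :
    √(β * exp (2 * A)) = √β * exp A := by
  rw [sqrt_mul hβ, mul_comm 2 A, ← exp_half, mul_div_cancel_right₀ _ two_ne_zero]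

theorem sqrt_le_mul_exp_and_mul_exp_neg_le_sqrt {β₀ β₁ a b : ℝ} (hβ₀ : 0 ≤ β₀)
    (hup : β₁ ≤ β₀ * exp (2 * (a + b))) (hlow : β₀ * exp (-(2 * (a + b))) ≤ β₁) :
    √β₁ ≤ √β₀ * exp a * exp b ∧ √β₀ * exp (-a) * exp (-b) ≤ √β₁ := by
  constructor
  · calc √β₁ ≤ √(β₀ * exp (2 * (a + b))) := sqrt_le_sqrt hup
      _ = √β₀ * exp a * exp b := by rw [sqrt_mul_exp_two_mul hβ₀, exp_add, mul_assoc]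
  · calc √β₀ * exp (-a) * exp (-b) = √(β₀ * exp (-(2 * (a + b)))) := by
          rw [← mul_neg, sqrt_mul_exp_two_mul hβ₀, neg_add, exp_add, mul_assoc]
      _ ≤ √β₁ := sqrt_le_sqrt hlow

def alphaSq (g : ℝ) (Φ : V3 → ℝ) (x v : V3) : ℝ :=
  v 2 ^ 2 + x 2 ^ 2 + 2 * pd 2 Φ ![x 0, x 1, 0] * x 2 + 2 * g * x 2

def alphaSqDeriv (Φ : V3 → ℝ) (x v : V3) : ℝ :=
  2 * v 2 * (pd 2 Φ ![x 0, x 1, 0] - pd 2 Φ x) + 2 * x 2 * v 2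
    + 2 * x 2 * (v 0 * pd 0 (pd 2 Φ) ![x 0, x 1, 0] + v 1 * pd 1 (pd 2 Φ) ![x 0, x 1, 0])

theorem hasDerivAt_alphaSq_comp {g : ℝ} {Φ : V3 → ℝ} (hψ : Differentiable ℝ (pd 2 Φ))
    {X V : ℝ → V3} {s : ℝ} (hX : HasDerivAt X (V s) s)
    (hV : HasDerivAt V (fun i => -(pd i Φ (X s)) - (if i = 2 then g else 0)) s) :
    HasDerivAt (fun u => alphaSq g Φ (X u) (V u)) (alphaSqDeriv Φ (X s) (V s)) s := by
  have hXi (i : Fin 3) : HasDerivAt (fun u => X u i) (V s i) s := hasDerivAt_pi.1 hX i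
  have hV2 : HasDerivAt (fun u => V u 2) (-(pd 2 Φ (X s)) - g) s := by
    simpa using hasDerivAt_pi.1 hV 2
  have hproj : HasDerivAt (fun u => ![X u 0, X u 1, 0]) ![V s 0, V s 1, 0] s := by
    refine hasDerivAt_pi.2 fun i => ?_
    fin_cases i
    exacts [hXi 0, hXi 1, hasDerivAt_const s 0]
  have hψproj : HasDerivAt (fun u => pd 2 Φ ![X u 0, X u 1, 0])
      (V s 0 * pd 0 (pd 2 Φ) ![X s 0, X s 1, 0] + V s 1 * pd 1 (pd 2 Φ) ![X s 0, X s 1, 0]) s := by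
    refine ((hψ _).hasFDerivAt.comp_hasDerivAt s hproj).congr_deriv ?_
    simp [fderiv_apply_eq_sum_pd, Fin.sum_univ_three]
  refine ((((hV2.pow 2).add ((hXi 2).pow 2)).add ((hψproj.const_mul 2).mul (hXi 2))).add
    ((hXi 2).const_mul (2 * g))).congr_deriv ?_
  simp only [alphaSqDeriv]
  ring

theorem sq_add_sq_add_mul_le_alphaSq {g : ℝ} {Φ : V3 → ℝ} {x v : V3}
    (hb : |pd 2 Φ ![x 0, x 1, 0]| ≤ g / 2) (hx : 0 ≤ x 2) :
    v 2 ^ 2 + x 2 ^ 2 + g * x 2 ≤ alphaSq g Φ x v := by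
  have := neg_le_of_abs_le hb
  unfold alphaSq
  nlinarith

theorem abs_alphaSqDeriv_le {g C₃₃ Cₘ : ℝ} {Φ : V3 → ℝ} (hg : 0 < g)
    (hψ : Differentiable ℝ (pd 2 Φ)) {x v : V3} (hx : 0 ≤ x 2)
    (hb : |pd 2 Φ ![x 0, x 1, 0]| ≤ g / 2)
    (hC₃₃ : ∀ y : V3, 0 ≤ y 2 → |pd 2 (pd 2 Φ) y| ≤ C₃₃)
    (hCₘ : √(pd 0 (pd 2 Φ) ![x 0, x 1, 0] ^ 2 + pd 1 (pd 2 Φ) ![x 0, x 1, 0] ^ 2) ≤ Cₘ) :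
    |alphaSqDeriv Φ x v| ≤ 2 * ((1 + C₃₃) + Cₘ / g * √(v 0 ^ 2 + v 1 ^ 2)) * alphaSq g Φ x v := by
  set p : V3 := ![x 0, x 1, 0]
  have hpx : p + x 2 • Pi.single 2 1 = x := by
    ext i; fin_cases i <;> simp [p]
  have hd : |pd 2 Φ p - pd 2 Φ x| ≤ C₃₃ * x 2 := by
    have := abs_sub_le_mul_of_abs_pd_le hψ 2 p hx fun θ hθ => hC₃₃ _ (by simpa [p] using hθ.1)
    rwa [hpx, abs_sub_comm] at this
  have hm : |v 0 * pd 0 (pd 2 Φ) p + v 1 * pd 1 (pd 2 Φ) p| ≤ √(v 0 ^ 2 + v 1 ^ 2) * Cₘ :=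
    (abs_mul_add_mul_le_sqrt_mul_sqrt _ _ _ _).trans
      (mul_le_mul_of_nonneg_left hCₘ (sqrt_nonneg _))
  exact abs_two_mul_add_two_mul_add_two_mul_le hg ((abs_nonneg _).trans (hC₃₃ x hx)) hx
    (sq_add_sq_add_mul_le_alphaSq hb hx) hd hm

theorem kinetic_distance_two_sided_general
    (g : ℝ) (hg : 0 < g) (Φ : V3 → ℝ) (hΦ : ContDiff ℝ 2 Φ)
    -- ‖∇ₓΦ‖_{L∞} ≤ g/2
    (hgrad : ∀ x : V3, 0 ≤ x 2 → gradNorm Φ x ≤ g / 2)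
    -- ‖∂²_{x₃}Φ‖_{L∞} ≤ C33 and ‖∇_{x∥}∂_{x₃}Φ‖_{L∞(x₃=0)} ≤ Cmix
    (C33 Cmix : ℝ)
    (hC33 : ∀ x : V3, 0 ≤ x 2 → |pd 2 (fun y => pd 2 Φ y) x| ≤ C33)
    (hCmix : ∀ x : V3, x 2 = 0 →
      Real.sqrt ((pd 0 (fun y => pd 2 Φ y) x) ^ 2 + (pd 1 (fun y => pd 2 Φ y) x) ^ 2) ≤ Cmix)
    (τ : ℝ)
    (x v : V3) (hx : 0 ≤ x 2)
    (X V : ℝ → V3) (hX0 : X 0 = x) (hV0 : V 0 = v)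
    (hode : ∀ s ∈ Set.Icc (-τ) (0:ℝ),
      HasDerivAt X (V s) s ∧
      HasDerivAt V (fun i => -(pd i Φ (X s)) - (if i = 2 then g else 0)) s ∧
      0 ≤ X s 2) :
    ∀ t ∈ Set.Icc (-τ) (0:ℝ),
      alphaK g Φ (X t) (V t)
          ≤ alphaK g Φ x v * Real.exp ((1 + C33) * |t|)
              * Real.exp ((1 / g) * Cmix
                  * ∫ s in t..0, Real.sqrt ((V s 0) ^ 2 + (V s 1) ^ 2)) ∧
      alphaK g Φ x v * Real.exp (-((1 + C33) * |t|))
              * Real.exp (-((1 / g) * Cmix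
                  * ∫ s in t..0, Real.sqrt ((V s 0) ^ 2 + (V s 1) ^ 2)))
          ≤ alphaK g Φ (X t) (V t) := by
  intro t ht
  have hψ := differentiable_pd hΦ 2
  have hsub : Icc t 0 ⊆ Icc (-τ) 0 := Icc_subset_Icc_left ht.1
  set nV : ℝ → ℝ := fun s => √(V s 0 ^ 2 + V s 1 ^ 2)
  have hV : ContinuousOn V (Icc t 0) := fun s hs =>
    (hode s (hsub hs)).2.1.continuousAt.continuousWithinAt
  have hnV : ContinuousOn nV (Icc t 0) := by fun_prop
  have hbdry (y : V3) : |pd 2 Φ ![y 0, y 1, 0]| ≤ g / 2 :=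
    (abs_pd_le_gradNorm Φ _ 2).trans (hgrad _ (by simp))
  obtain ⟨hup, hlow⟩ := gronwall_two_sided_of_abs_deriv_le_mul ht.2
    (f := fun s => 2 * ((1 + C33) + Cmix / g * nV s)) (by fun_prop)
    (fun s hs => hasDerivAt_alphaSq_comp hψ (hode s (hsub hs)).1 (hode s (hsub hs)).2.1)
    (fun s hs => abs_alphaSqDeriv_le hg hψ (hode s (hsub (Ioo_subset_Icc_self hs))).2.2 (hbdry _)
      hC33 (hCmix _ (by simp)))
  have hint : ∫ s in t..0, 2 * ((1 + C33) + Cmix / g * nV s)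
      = 2 * ((1 + C33) * |t| + 1 / g * Cmix * ∫ s in t..0, nV s) := by
    rw [intervalIntegral.integral_const_mul, intervalIntegral.integral_add intervalIntegrable_const
      ((hnV.intervalIntegrable_of_Icc ht.2).const_mul _), intervalIntegral.integral_const,
      intervalIntegral.integral_const_mul, abs_of_nonpos ht.2, smul_eq_mul]
    ring
  have hα : 0 ≤ alphaSq g Φ x v :=
    (add_nonneg (add_nonneg (sq_nonneg _) (sq_nonneg _)) (mul_nonneg hg.le hx)).trans
      (sq_add_sq_add_mul_le_alphaSq (hbdry x) hx)
  rw [hint, hX0, hV0] at hup hlow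
  exact sqrt_le_mul_exp_and_mul_exp_neg_le_sqrt hα hup hlow

/-- **Two-sided Gronwall bounds for the kinetic distance** along characteristics
`X' = V`, `V' = −∇ₓΦ(X) − g e₃` staying in the half-space `{x₃ ≥ 0}`. -/
theorem kinetic_distance_two_sided
    (g : ℝ) (hg : 0 < g) (Φ : V3 → ℝ) (hΦ : ContDiff ℝ 2 Φ)
    -- ‖∇ₓΦ‖_{L∞} ≤ g/2
    (hgrad : ∀ x : V3, 0 ≤ x 2 → gradNorm Φ x ≤ g / 2)
    -- ‖∂²_{x₃}Φ‖_{L∞} ≤ C33 and ‖∇_{x∥}∂_{x₃}Φ‖_{L∞(x₃=0)} ≤ Cmix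
    (C33 Cmix : ℝ)
    (hC33 : ∀ x : V3, 0 ≤ x 2 → |pd 2 (fun y => pd 2 Φ y) x| ≤ C33)
    (hCmix : ∀ x : V3, x 2 = 0 →
      Real.sqrt ((pd 0 (fun y => pd 2 Φ y) x) ^ 2 + (pd 1 (fun y => pd 2 Φ y) x) ^ 2) ≤ Cmix)
    (τ : ℝ) (hτ : 0 ≤ τ)
    (x v : V3) (hx : 0 ≤ x 2)
    (X V : ℝ → V3) (hX0 : X 0 = x) (hV0 : V 0 = v)
    (hode : ∀ s ∈ Set.Icc (-τ) (0:ℝ),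
      HasDerivAt X (V s) s ∧
      HasDerivAt V (fun i => -(pd i Φ (X s)) - (if i = 2 then g else 0)) s ∧
      0 ≤ X s 2) :
    ∀ t ∈ Set.Icc (-τ) (0:ℝ),
      alphaK g Φ (X t) (V t)
          ≤ alphaK g Φ x v * Real.exp ((1 + C33) * |t|)
              * Real.exp ((1 / g) * Cmix
                  * ∫ s in t..0, Real.sqrt ((V s 0) ^ 2 + (V s 1) ^ 2)) ∧
      alphaK g Φ x v * Real.exp (-((1 + C33) * |t|))
              * Real.exp (-((1 / g) * Cmix
                  * ∫ s in t..0, Real.sqrt ((V s 0) ^ 2 + (V s 1) ^ 2)))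
          ≤ alphaK g Φ (X t) (V t) :=
  kinetic_distance_two_sided_general g hg Φ hΦ hgrad C33 Cmix hC33 hCmix τ x v hx X V hX0 hV0 hode

end
end

section
/- Lemma (weighted integral with a logarithmically singular kernel). There exists a universal constant C > 0 such that for all β > 0, g > 0 and x₃ > 0: ∫_ℝ e^{−(β/2) v²} ( v² + x₃² + g x₃ )^{−1/2} dv ≤ C ( 1 + 1_{x₃ ≤ 1} |ln( x₃² + g x₃ )| + β^{−1/2} ). -/
/-!
Put `a = x₃² + g x₃`. The integrand is at most `(v² + a)^{-1/2}` on `[-1, 1]` and at most the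
Gaussian `e^{-(β/2) v²}` off it. The kernel has the antiderivative `arsinh (v / √a)`, so it
contributes `2 arsinh (1/√a) ≤ 2 log 3 + log⁺ (1/a)`, and `log⁺ (1/a)` vanishes once `x₃ > 1`;
the Gaussian contributes `√(2π/β)`.
-/

open Real MeasureTheory Set

lemma hasDerivAt_arsinh_div_sqrt {a : ℝ} (ha : 0 < a) (v : ℝ) :
    HasDerivAt (fun v => arsinh (v / √a)) (√(v ^ 2 + a))⁻¹ v := by
  refine ((hasDerivAt_id v).div_const √a).arsinh.congr_deriv ?_
  rw [smul_eq_mul, id, one_div, ← mul_inv, ← sqrt_mul (by positivity), add_mul,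
    one_mul, div_pow, sq_sqrt ha.le, div_mul_cancel₀ _ ha.ne', add_comm]

lemma continuous_inv_sqrt_sq_add {a : ℝ} (ha : 0 < a) :
    Continuous fun v : ℝ => (√(v ^ 2 + a))⁻¹ :=
  (by fun_prop : Continuous fun v : ℝ => √(v ^ 2 + a)).inv₀ fun v =>
    (sqrt_pos.2 (by positivity)).ne'

lemma integral_inv_sqrt_sq_add {a : ℝ} (ha : 0 < a) (b : ℝ) :
    ∫ v in -b..b, (√(v ^ 2 + a))⁻¹ = 2 * arsinh (b / √a) := by
  rw [intervalIntegral.integral_eq_sub_of_hasDerivAt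
    (fun v _ => hasDerivAt_arsinh_div_sqrt ha v)
    ((continuous_inv_sqrt_sq_add ha).intervalIntegrable _ _), neg_div, arsinh_neg]
  ring

lemma lintegral_Icc_inv_sqrt_sq_add {a b : ℝ} (ha : 0 < a) (hb : 0 ≤ b) :
    ∫⁻ v in Icc (-b) b, ENNReal.ofReal (√(v ^ 2 + a))⁻¹ =
      ENNReal.ofReal (2 * arsinh (b / √a)) := by
  rw [← ofReal_integral_eq_lintegral_ofReal
      (continuous_inv_sqrt_sq_add ha).continuousOn.integrableOn_Icc
      (ae_of_all _ fun v => by positivity),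
    integral_Icc_eq_integral_Ioc, ← intervalIntegral.integral_of_le (by linarith),
    integral_inv_sqrt_sq_add ha]

lemma arsinh_le_log_three_add_posLog {y : ℝ} (hy : 0 ≤ y) : arsinh y ≤ log 3 + log⁺ y := by
  have hroot : √(1 + y ^ 2) ≤ 1 + y := by
    rw [sqrt_le_left (by positivity)]; nlinarith
  rw [posLog_eq_log_max_one hy, ← log_mul (by norm_num) (by positivity), arsinh]
  gcongr
  linarith [le_max_left 1 y, le_max_right 1 y]

lemma two_mul_arsinh_inv_sqrt_le {a : ℝ} (ha : 0 < a) :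
    2 * arsinh (√a)⁻¹ ≤ 2 * log 3 + log⁺ a⁻¹ := by
  have h := arsinh_le_log_three_add_posLog (inv_nonneg.2 (sqrt_nonneg a))
  have hsq : log⁺ a⁻¹ = 2 * log⁺ (√a)⁻¹ := by
    rw [← Nat.cast_ofNat, ← posLog_pow, inv_pow, sq_sqrt ha.le]
  linarith

lemma exp_mul_inv_sqrt_le_indicator_add {c a : ℝ} (hc : 0 ≤ c) (ha : 0 ≤ a) (v : ℝ) :
    exp (-c * v ^ 2) * (√(v ^ 2 + a))⁻¹ ≤
      (Icc (-1) 1).indicator (fun v => (√(v ^ 2 + a))⁻¹) v + exp (-c * v ^ 2) := by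
  by_cases hv : v ∈ Icc (-1) 1
  · have hexp : exp (-c * v ^ 2) ≤ 1 := exp_le_one_iff.2 (by nlinarith [sq_nonneg v])
    rw [indicator_of_mem hv]
    nlinarith [exp_pos (-c * v ^ 2), inv_nonneg.2 (sqrt_nonneg (v ^ 2 + a))]
  · have hv1 : 1 ≤ v ^ 2 := by
      simp only [mem_Icc, not_and_or, not_le] at hv
      rcases hv with h | h <;> nlinarith
    have hroot : (√(v ^ 2 + a))⁻¹ ≤ 1 :=
      inv_le_one_of_one_le₀ (one_le_sqrt.2 (by linarith))
    rw [indicator_of_notMem hv, zero_add]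
    exact mul_le_of_le_one_right (exp_pos _).le hroot

lemma lintegral_exp_neg_mul_sq {c : ℝ} (hc : 0 < c) :
    ∫⁻ v, ENNReal.ofReal (exp (-c * v ^ 2)) = ENNReal.ofReal √(π / c) := by
  rw [← ofReal_integral_eq_lintegral_ofReal (integrable_exp_neg_mul_sq hc)
    (ae_of_all _ fun v => (exp_pos _).le), integral_gaussian]

lemma lintegral_exp_neg_mul_sq_mul_inv_sqrt_le {c a : ℝ} (hc : 0 < c) (ha : 0 < a) :
    ∫⁻ v, ENNReal.ofReal (exp (-c * v ^ 2) * (√(v ^ 2 + a))⁻¹) ≤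
      ENNReal.ofReal (2 * arsinh (√a)⁻¹ + √(π / c)) := by
  calc ∫⁻ v, ENNReal.ofReal (exp (-c * v ^ 2) * (√(v ^ 2 + a))⁻¹)
      ≤ ∫⁻ v, (Icc (-1) 1).indicator (fun v => ENNReal.ofReal (√(v ^ 2 + a))⁻¹) v
          + ENNReal.ofReal (exp (-c * v ^ 2)) := by
        refine lintegral_mono fun v => ?_
        calc ENNReal.ofReal (exp (-c * v ^ 2) * (√(v ^ 2 + a))⁻¹)
            ≤ ENNReal.ofReal ((Icc (-1) 1).indicator (fun v => (√(v ^ 2 + a))⁻¹) v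
                + exp (-c * v ^ 2)) :=
              ENNReal.ofReal_le_ofReal (exp_mul_inv_sqrt_le_indicator_add hc.le ha.le v)
          _ ≤ _ := ENNReal.ofReal_add_le.trans_eq <| by
              congr 1
              by_cases hv : v ∈ Icc (-1) 1 <;> simp [hv]
    _ = _ := by
        rw [lintegral_add_right _ (by fun_prop), lintegral_indicator measurableSet_Icc,
          lintegral_Icc_inv_sqrt_sq_add ha zero_le_one, one_div, lintegral_exp_neg_mul_sq hc,
          ENNReal.ofReal_add (mul_nonneg zero_le_two (arsinh_nonneg_iff.2 (by positivity)))
            (sqrt_nonneg _)]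

lemma posLog_inv_sq_add_mul_le {g x : ℝ} (hg : 0 < g) (hx : 0 < x) :
    log⁺ (x ^ 2 + g * x)⁻¹ ≤ if x ≤ 1 then |log (x ^ 2 + g * x)| else 0 := by
  split_ifs with hx1
  · rw [posLog_apply, ← abs_neg, ← log_inv]
    exact max_le (abs_nonneg _) (le_abs_self _)
  · have hlarge : 1 < x ^ 2 + g * x := by nlinarith
    rw [(posLog_eq_zero_iff _).2 ?_]
    rw [abs_of_pos (by positivity)]
    exact inv_le_one_of_one_le₀ hlarge.le

lemma sqrt_pi_div_half_le {β : ℝ} (hβ : 0 < β) : √(π / (β / 2)) ≤ 3 * (√β)⁻¹ := by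
  have h2pi : √(2 * π) ≤ 3 := by
    rw [sqrt_le_left (by norm_num)]; nlinarith [pi_le_four]
  rw [div_div_eq_mul_div, mul_comm, sqrt_div' _ hβ.le, div_eq_mul_inv]
  gcongr

/-- **Weighted integral with a logarithmically singular kernel.** -/
theorem gaussian_log_singular_integral :
    ∃ C : ℝ, 0 < C ∧
      ∀ β g x₃ : ℝ, 0 < β → 0 < g → 0 < x₃ →
        ∫⁻ v : ℝ, ENNReal.ofReal
            (Real.exp (-(β / 2) * v ^ 2) * (Real.sqrt (v ^ 2 + x₃ ^ 2 + g * x₃))⁻¹)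
          ≤ ENNReal.ofReal
            (C * (1 + (if x₃ ≤ 1 then |Real.log (x₃ ^ 2 + g * x₃)| else 0)
              + (Real.sqrt β)⁻¹)) := by
  refine ⟨4, by norm_num, fun β g x₃ hβ hg hx => ?_⟩
  simp only [add_assoc (_ ^ 2 : ℝ)]
  have ha : 0 < x₃ ^ 2 + g * x₃ := by positivity
  have hlog3 : log 3 ≤ 2 := by linarith [log_le_sub_one_of_pos (by norm_num : (0 : ℝ) < 3)]
  have hmid := two_mul_arsinh_inv_sqrt_le ha
  have hind := posLog_inv_sq_add_mul_le hg hx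
  have htail := sqrt_pi_div_half_le hβ
  refine (lintegral_exp_neg_mul_sq_mul_inv_sqrt_le (half_pos hβ) ha).trans
    (ENNReal.ofReal_le_ofReal ?_)
  linarith [posLog_nonneg (x := (x₃ ^ 2 + g * x₃)⁻¹), inv_nonneg.2 (sqrt_nonneg β)]
end

section
/- Lemma (exponential–logarithmic convolution estimate). There exists a universal constant C > 0 such that for all B > 0 and all x₃ ≥ 0: ∫_0^∞ e^{−B y} ln( 1 + 1/(2 (x₃ − y)²) ) dy ≤ C ( 1 + 1/B ). -/
/-!
For `y > 0` the weight `e^{-By}` is at most `1`, and `ln(1 + 1/(2t²)) ≤ 1 + 2 (-ln |t|)⁺`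
(the bound is `1/2` for `|t| ≥ 1` and `ln 2 - 2 ln |t|` for `|t| ≤ 1`). Hence the integrand is
dominated by `e^{-By} + 2 (-ln |x₃ - y|)⁺`. The first term integrates to `1/B`; the second is at
most its integral over the whole line, which by translation invariance is
`2 ∫_{-1}^{1} -ln |t| dt = 4`. So `C = 4` works.
-/

open Real MeasureTheory Set

theorem log_one_add_inv_two_mul_sq_le (t : ℝ) :
    log (1 + 1 / (2 * t ^ 2)) ≤ 1 + 2 * max 0 (-log t) := by
  have hmax := le_max_right 0 (-log t)
  have hmax₀ := le_max_left 0 (-log t)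
  rcases eq_or_ne t 0 with rfl | ht₀
  · simp
  have ht₂ : 0 < t ^ 2 := by positivity
  rcases le_total 1 |t| with ht | ht
  · have hsq : 1 ≤ t ^ 2 := by nlinarith [sq_abs t]
    calc log (1 + 1 / (2 * t ^ 2)) ≤ 1 / (2 * t ^ 2) := by
          linarith [log_le_sub_one_of_pos (show 0 < 1 + 1 / (2 * t ^ 2) by positivity)]
      _ ≤ 1 := by rw [div_le_one (by positivity)]; linarith
      _ ≤ 1 + 2 * max 0 (-log t) := by linarith
  · have hsq : t ^ 2 ≤ 1 := by nlinarith [sq_abs t, abs_nonneg t]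
    have hlog₂ : log 2 ≤ 1 := by linarith [log_le_sub_one_of_pos two_pos]
    calc log (1 + 1 / (2 * t ^ 2)) ≤ log (2 / t ^ 2) := by
          refine log_le_log (by positivity) ?_
          rw [le_div_iff₀ ht₂]
          field_simp
          linarith
      _ = log 2 - 2 * log t := by
          rw [log_div two_ne_zero ht₂.ne', log_pow]
          push_cast
          ring
      _ ≤ 1 + 2 * max 0 (-log t) := by linarith

theorem ofReal_mul_log_one_add_inv_two_mul_sq_le {e : ℝ} (he₀ : 0 ≤ e) (he₁ : e ≤ 1) (t : ℝ) :
    ENNReal.ofReal (e * log (1 + 1 / (2 * t ^ 2)))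
      ≤ ENNReal.ofReal e + 2 * ENNReal.ofReal (-log t) := by
  have hlog : ENNReal.ofReal (log (1 + 1 / (2 * t ^ 2))) ≤ 1 + 2 * ENNReal.ofReal (-log t) := by
    calc _ ≤ ENNReal.ofReal (1 + 2 * max 0 (-log t)) :=
          ENNReal.ofReal_le_ofReal (log_one_add_inv_two_mul_sq_le t)
      _ = 1 + 2 * ENNReal.ofReal (-log t) := by
          rw [ENNReal.ofReal_add zero_le_one (by positivity), ENNReal.ofReal_mul zero_le_two]
          simp
  calc ENNReal.ofReal (e * log (1 + 1 / (2 * t ^ 2)))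
      ≤ ENNReal.ofReal e * (1 + 2 * ENNReal.ofReal (-log t)) := by
        rw [ENNReal.ofReal_mul he₀]
        gcongr
    _ = ENNReal.ofReal e + ENNReal.ofReal e * (2 * ENNReal.ofReal (-log t)) := by
        rw [mul_add, mul_one]
    _ ≤ ENNReal.ofReal e + 2 * ENNReal.ofReal (-log t) :=
        add_le_add le_rfl (mul_le_of_le_one_left' (ENNReal.ofReal_le_one.2 he₁))

-- Mathlib's `log` is even (`log t = log |t|`), so the integrand lives on `[-1, 1]`.
theorem lintegral_ofReal_neg_log : ∫⁻ t, ENNReal.ofReal (-log t) = 2 := by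
  have hsupp : (fun t => ENNReal.ofReal (-log t))
      = (Ioc (-1) 1).indicator (fun t => ENNReal.ofReal (-log t)) := by
    ext t
    by_cases ht : t ∈ Ioc (-1 : ℝ) 1
    · rw [indicator_of_mem ht]
    · rw [indicator_of_notMem ht, ENNReal.ofReal_eq_zero, neg_nonpos, ← log_abs]
      exact log_nonneg (not_lt.1 fun h => ht ⟨(abs_lt.1 h).1, (abs_lt.1 h).2.le⟩)
  rw [hsupp, lintegral_indicator measurableSet_Ioc,
    ← ofReal_integral_eq_lintegral_ofReal (f := fun t => -log t)
    intervalIntegral.intervalIntegrable_log'.1.neg]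
  · rw [← intervalIntegral.integral_of_le (by norm_num), intervalIntegral.integral_neg,
      integral_log]
    norm_num
  · filter_upwards [ae_restrict_mem measurableSet_Ioc] with t ht
    rw [Pi.zero_apply, neg_nonneg, ← log_abs]
    exact log_nonpos (abs_nonneg t) (abs_le.2 ⟨ht.1.le, ht.2⟩)

theorem lintegral_ofReal_exp_neg_mul_Ioi {B : ℝ} (hB : 0 < B) :
    ∫⁻ y in Ioi 0, ENNReal.ofReal (exp (-B * y)) = ENNReal.ofReal (1 / B) := by
  have hB' : -B < 0 := neg_neg_of_pos hB
  rw [← ofReal_integral_eq_lintegral_ofReal (integrableOn_exp_mul_Ioi hB' 0)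
    (ae_of_all _ fun _ => (exp_pos _).le), integral_exp_mul_Ioi hB', mul_zero, exp_zero,
    neg_div_neg_eq]

/-- **Exponential–logarithmic convolution estimate.** -/
theorem exp_log_convolution :
    ∃ C : ℝ, 0 < C ∧
      ∀ B x₃ : ℝ, 0 < B → 0 ≤ x₃ →
        ∫⁻ y in Set.Ioi (0:ℝ), ENNReal.ofReal
            (Real.exp (-B * y) * Real.log (1 + 1 / (2 * (x₃ - y) ^ 2)))
          ≤ ENNReal.ofReal (C * (1 + 1 / B)) := by
  refine ⟨4, by norm_num, fun B x₃ hB _ => ?_⟩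
  calc ∫⁻ y in Ioi 0, ENNReal.ofReal (exp (-B * y) * log (1 + 1 / (2 * (x₃ - y) ^ 2)))
      ≤ ∫⁻ y in Ioi 0, (ENNReal.ofReal (exp (-B * y)) + 2 * ENNReal.ofReal (-log (x₃ - y))) :=
        setLIntegral_mono (by fun_prop) fun y hy =>
          ofReal_mul_log_one_add_inv_two_mul_sq_le (exp_pos _).le
            (exp_le_one_iff.2 (by nlinarith [mem_Ioi.1 hy])) _
    _ = (∫⁻ y in Ioi 0, ENNReal.ofReal (exp (-B * y)))
          + 2 * ∫⁻ y in Ioi 0, ENNReal.ofReal (-log (x₃ - y)) := by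
        rw [lintegral_add_left (by fun_prop), lintegral_const_mul _ (by fun_prop)]
    _ ≤ ENNReal.ofReal (1 / B) + 2 * ∫⁻ y, ENNReal.ofReal (-log (x₃ - y)) := by
        rw [lintegral_ofReal_exp_neg_mul_Ioi hB]
        gcongr
        exact Measure.restrict_le_self
    _ = ENNReal.ofReal (1 / B + 4) := by
        rw [lintegral_sub_left_eq_self (fun t => ENNReal.ofReal (-log t)) x₃,
          lintegral_ofReal_neg_log, ENNReal.ofReal_add (by positivity) (by norm_num)]
        norm_num
    _ ≤ ENNReal.ofReal (4 * (1 + 1 / B)) :=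
        ENNReal.ofReal_le_ofReal (by nlinarith [one_div_pos.2 hB])
end
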